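/- (Bianchi identity for characteristic holonomy so(3); the key algebraic step for the classification by the Stiefel manifold SO(5)/SO(3).) Let a, b, c, d, x ∈ ℝ with d = 3c or d = −4c, and let T := d·φ + a(−2e₁₂₃ + e₁₃₆ − e₁₄₅ + e₂₃₅ + e₂₄₆ + 2e₃₅₆) + b(−2e₁₂₄ − e₁₃₅ − e₁₄₆ + e₂₃₆ − e₂₄₅ + 2e₄₅₆) + c(4e₁₂₇ − 3e₁₃₅ + 3e₁₄₆ + 3e₂₃₆ + 3e₂₄₅ + 4e₃₄₇ + 4e₅₆₇), and let S₁ := e₁₂−e₅₆, S₂ := e₁₃+e₂₄+e₃₅+e₄₆, S₃ := e₁₄−e₂₃+e₃₆−e₄₅. Then the 8×8 matrix σ(T)² + x(2σ(S₁)² + σ(S₂)² + σ(S₃)²) is a scalar multiple of the identity if and only if (d = −4c and x = a² + b² − 49c²) or (d = 3c, a = 0, b = 0 and 2x = −49c²). (This is the Bianchi identity 'T² + R^c is a scalar in the Clifford algebra' for the curvature operator R^c = x(2S₁⊗S₁ + S₂⊗S₂ + S₃⊗S₃), quantized in the Clifford algebra as x(2σ(S₁)σ(S₁) + σ(S₂)σ(S₂)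 + σ(S₃)σ(S₃)).) -/

import Mathlib

open Matrix BigOperators

noncomputable section

abbrev M8 : Type := Matrix (Fin 8) (Fin 8) ℝ

/-- 2-forms on ℝ⁷ -/
abbrev Lam2 : Type := AlternatingMap ℝ (Fin 7 → ℝ) ℝ (Fin 2)

/-- 3-forms on ℝ⁷ -/
abbrev Lam3 : Type := AlternatingMap ℝ (Fin 7 → ℝ) ℝ (Fin 3)

/-- standard basis of ℝ⁷ -/
def u (i : Fin 7) : Fin 7 → ℝ := Pi.single i 1

/-- standard spinor basis ψ₁,…,ψ₈ (0-indexed) -/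
def ψ (k : Fin 8) : Fin 8 → ℝ := Pi.single k 1

/-- E_{ij} : ψ_i ↦ ψ_j, ψ_j ↦ -ψ_i -/
def EE (i j : Fin 8) : M8 := Matrix.single j i 1 - Matrix.single i j 1

/-- Clifford multiplication by e₁,…,e₇ (0-indexed) -/
def e : Fin 7 → M8 :=
  ![EE 0 7 + EE 1 6 - EE 2 5 - EE 3 4,
    -EE 0 6 + EE 1 7 + EE 2 4 - EE 3 5,
    -EE 0 5 + EE 1 4 - EE 2 7 + EE 3 6,
    -EE 0 4 - EE 1 5 - EE 2 6 - EE 3 7,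
    -EE 0 2 - EE 1 3 + EE 4 6 + EE 5 7,
    EE 0 3 - EE 1 2 - EE 4 7 + EE 5 6,
    EE 0 1 - EE 2 3 - EE 4 5 + EE 6 7]

def pick2 (i j : Fin 7) : (Fin 7 → ℝ) →ₗ[ℝ] (Fin 2 → ℝ) :=
  LinearMap.pi fun m => LinearMap.proj (![i, j] m)

def pick3 (i j k : Fin 7) : (Fin 7 → ℝ) →ₗ[ℝ] (Fin 3 → ℝ) :=
  LinearMap.pi fun m => LinearMap.proj (![i, j, k] m)

/-- the 2-form e_i ∧ e_j -/
def w2 (i j : Fin 7) : Lam2 :=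
  (Matrix.detRowAlternating : AlternatingMap ℝ (Fin 2 → ℝ) ℝ (Fin 2)).compLinearMap (pick2 i j)

/-- the 3-form e_i ∧ e_j ∧ e_k -/
def w3 (i j k : Fin 7) : Lam3 :=
  (Matrix.detRowAlternating : AlternatingMap ℝ (Fin 3 → ℝ) ℝ (Fin 3)).compLinearMap (pick3 i j k)

/-- Clifford action of a 2-form -/
def σ2 (ω : Lam2) : M8 :=
  ∑ i : Fin 7, ∑ j : Fin 7, if i < j then ω ![u i, u j] • (e i * e j) else 0

/-- Clifford action of a 3-form -/
def σ3 (T : Lam3) : M8 :=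
  ∑ i : Fin 7, ∑ j : Fin 7, ∑ k : Fin 7,
    if i < j ∧ j < k then T ![u i, u j, u k] • (e i * e j * e k) else 0

/-- the skew-symmetric 7×7 matrix A_ω associated to a 2-form ω -/
def A2 (ω : Lam2) : Matrix (Fin 7) (Fin 7) ℝ :=
  ∑ i : Fin 7, ∑ j : Fin 7,
    if i < j then ω ![u i, u j] •
      (Matrix.single j i (1 : ℝ) - Matrix.single i j 1) else 0

/-- T is ω-invariant: the natural action of the 2-form ω on the 3-form T vanishes -/
def inv3 (ω : Lam2) (T : Lam3) : Prop :=
  ∀ X Y Z : Fin 7 → ℝ,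
    T ![A2 ω *ᵥ X, Y, Z] + T ![X, A2 ω *ᵥ Y, Z] + T ![X, Y, A2 ω *ᵥ Z] = 0

/-- the standard G₂ 3-form φ = e₁₂₇+e₁₃₅−e₁₄₆−e₂₃₆−e₂₄₅+e₃₄₇+e₅₆₇ -/
def φf : Lam3 :=
  w3 0 1 6 + w3 0 2 4 - w3 0 3 5 - w3 1 2 5 - w3 1 3 4 + w3 2 3 6 + w3 4 5 6

def S1f : Lam2 := w2 0 1 - w2 4 5
def S2f : Lam2 := w2 0 2 + w2 1 3 + w2 2 4 + w2 3 5
def S3f : Lam2 := w2 0 3 - w2 1 2 + w2 2 5 - w2 3 4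

def Af : Lam3 :=
  -(2:ℝ) • w3 0 1 2 + w3 0 2 5 - w3 0 3 4 + w3 1 2 4 + w3 1 3 5 + (2:ℝ) • w3 2 4 5
def Bf : Lam3 :=
  -(2:ℝ) • w3 0 1 3 - w3 0 2 4 - w3 0 3 5 + w3 1 2 5 - w3 1 3 4 + (2:ℝ) • w3 3 4 5
def Cf : Lam3 :=
  (4:ℝ) • w3 0 1 6 - (3:ℝ) • w3 0 2 4 + (3:ℝ) • w3 0 3 5 + (3:ℝ) • w3 1 2 5
    + (3:ℝ) • w3 1 3 4 + (4:ℝ) • w3 2 3 6 + (4:ℝ) • w3 4 5 6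

/-!
All Clifford images involved are integer matrices, so their products can be computed exactly:
the squares and anticommutators of `σ(φ)`, `σ(A)`, `σ(B)`, `σ(C)` and the curvature term are
combinations of `σ(A)`, `σ(B)` and the orthogonal projections `P₀`, `P₁`, `P₂` onto `ψ₁`, `ψ₂` and
`⟨ψ₃, …, ψ₈⟩`. This gives
`σ(T)² + x R = 49 d² P₀ + (d - 24 c)² P₁ + (16 (a² + b²) + (d + 4 c)² - 16 x) P₂
  + 2 (d + 4 c) (a σ(A) + b σ(B))`,
which is scalar exactly when the three diagonal coefficients agree and
`a (d + 4 c) = b (d + 4 c) = 0`; the first two agree iff `(d + 4 c) (d - 3 c) = 0`.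
-/

lemma σ2_add (ω ω' : Lam2) : σ2 (ω + ω') = σ2 ω + σ2 ω' := by
  simp only [σ2, AlternatingMap.add_apply, add_smul, ← Finset.sum_add_distrib, ite_add_ite,
    add_zero]

lemma σ2_sub (ω ω' : Lam2) : σ2 (ω - ω') = σ2 ω - σ2 ω' := by
  simp only [σ2, AlternatingMap.sub_apply, sub_smul, ← Finset.sum_sub_distrib, ite_sub_ite,
    sub_zero]

lemma σ3_add (T T' : Lam3) : σ3 (T + T') = σ3 T + σ3 T' := by
  simp only [σ3, AlternatingMap.add_apply, add_smul, ← Finset.sum_add_distrib, ite_add_ite,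
    add_zero]

lemma σ3_sub (T T' : Lam3) : σ3 (T - T') = σ3 T - σ3 T' := by
  simp only [σ3, AlternatingMap.sub_apply, sub_smul, ← Finset.sum_sub_distrib, ite_sub_ite,
    sub_zero]

lemma σ3_smul (r : ℝ) (T : Lam3) : σ3 (r • T) = r • σ3 T := by
  simp only [σ3, AlternatingMap.smul_apply, smul_eq_mul, Finset.smul_sum, smul_ite, smul_zero,
    mul_smul]

lemma w2_apply_u {p q i j : Fin 7} (hpq : p < q) (hij : i < j) :
    w2 p q ![u i, u j] = if i = p ∧ j = q then 1 else 0 := by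
  change Matrix.det (Matrix.of fun m s => (![u i, u j] m) (![p, q] s)) = _
  simp only [Matrix.det_fin_two, u, Pi.single_apply, of_apply, Matrix.cons_val_zero,
    Matrix.cons_val_one]
  split_ifs <;> first | omega | norm_num

lemma w3_apply_u {p q r i j k : Fin 7} (hpq : p < q) (hqr : q < r) (hij : i < j) (hjk : j < k) :
    w3 p q r ![u i, u j, u k] = if i = p ∧ j = q ∧ k = r then 1 else 0 := by
  change Matrix.det (Matrix.of fun m s => (![u i, u j, u k] m) (![p, q, r] s)) = _
  simp only [Matrix.det_fin_three, u, Pi.single_apply, of_apply, Matrix.cons_val]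
  split_ifs <;> first | omega | norm_num

lemma σ2_w2 {p q : Fin 7} (hpq : p < q) : σ2 (w2 p q) = e p * e q := by
  have summand (i j : Fin 7) : (if i < j then w2 p q ![u i, u j] • (e i * e j) else 0)
      = if j = q then if i = p then e p * e q else 0 else 0 := by
    by_cases hij : i < j
    · rw [if_pos hij, w2_apply_u hpq hij]
      split_ifs <;> simp_all
    · rw [if_neg hij]
      split_ifs <;> simp_all
  simp only [σ2, summand, Finset.sum_ite_eq', Finset.mem_univ, if_true]

lemma σ3_w3 {p q r : Fin 7} (hpq : p < q) (hqr : q < r) :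
    σ3 (w3 p q r) = e p * e q * e r := by
  have summand (i j k : Fin 7) :
      (if i < j ∧ j < k then w3 p q r ![u i, u j, u k] • (e i * e j * e k) else 0)
        = if k = r then if j = q then if i = p then e p * e q * e r else 0 else 0 else 0 := by
    by_cases hijk : i < j ∧ j < k
    · rw [if_pos hijk, w3_apply_u hpq hqr hijk.1 hijk.2]
      split_ifs <;> simp_all
    · rw [if_neg hijk]
      split_ifs <;> simp_all
  simp only [σ3, summand, Finset.sum_ite_eq', Finset.mem_univ, if_true]

def elemSkew (R : Type*) [Ring R] (i j : Fin 8) : Matrix (Fin 8) (Fin 8) R :=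
  single j i 1 - single i j 1

/-- The matrices `e` over an arbitrary ring: over `ℤ`, products of them are evaluated by
`decide`. -/
def cliffordGen (R : Type*) [Ring R] : Fin 7 → Matrix (Fin 8) (Fin 8) R :=
  ![elemSkew R 0 7 + elemSkew R 1 6 - elemSkew R 2 5 - elemSkew R 3 4,
    -elemSkew R 0 6 + elemSkew R 1 7 + elemSkew R 2 4 - elemSkew R 3 5,
    -elemSkew R 0 5 + elemSkew R 1 4 - elemSkew R 2 7 + elemSkew R 3 6,
    -elemSkew R 0 4 - elemSkew R 1 5 - elemSkew R 2 6 - elemSkew R 3 7,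
    -elemSkew R 0 2 - elemSkew R 1 3 + elemSkew R 4 6 + elemSkew R 5 7,
    elemSkew R 0 3 - elemSkew R 1 2 - elemSkew R 4 7 + elemSkew R 5 6,
    elemSkew R 0 1 - elemSkew R 2 3 - elemSkew R 4 5 + elemSkew R 6 7]

lemma map_cliffordGen {R S : Type*} [Ring R] [Ring S] (f : R →+* S) (i : Fin 7) :
    (cliffordGen R i).map f = cliffordGen S i := by
  have hE (a b : Fin 8) : (elemSkew R a b).map f = elemSkew S a b := by
    simp [elemSkew, Matrix.map_sub]
  fin_cases i <;> simp [cliffordGen, Matrix.map_add, Matrix.map_sub, Matrix.map_neg, hE]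

namespace IntModel

local notation "γ" => cliffordGen ℤ

def φ : Matrix (Fin 8) (Fin 8) ℤ :=
  γ 0 * γ 1 * γ 6 + γ 0 * γ 2 * γ 4 - γ 0 * γ 3 * γ 5 - γ 1 * γ 2 * γ 5 - γ 1 * γ 3 * γ 4
    + γ 2 * γ 3 * γ 6 + γ 4 * γ 5 * γ 6

def A : Matrix (Fin 8) (Fin 8) ℤ :=
  (-2 : ℤ) • (γ 0 * γ 1 * γ 2) + γ 0 * γ 2 * γ 5 - γ 0 * γ 3 * γ 4 + γ 1 * γ 2 * γ 4
    + γ 1 * γ 3 * γ 5 + (2 : ℤ) • (γ 2 * γ 4 * γ 5)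

def B : Matrix (Fin 8) (Fin 8) ℤ :=
  (-2 : ℤ) • (γ 0 * γ 1 * γ 3) - γ 0 * γ 2 * γ 4 - γ 0 * γ 3 * γ 5 + γ 1 * γ 2 * γ 5
    - γ 1 * γ 3 * γ 4 + (2 : ℤ) • (γ 3 * γ 4 * γ 5)

def C : Matrix (Fin 8) (Fin 8) ℤ :=
  (4 : ℤ) • (γ 0 * γ 1 * γ 6) - (3 : ℤ) • (γ 0 * γ 2 * γ 4) + (3 : ℤ) • (γ 0 * γ 3 * γ 5)
    + (3 : ℤ) • (γ 1 * γ 2 * γ 5) + (3 : ℤ) • (γ 1 * γ 3 * γ 4) + (4 : ℤ) • (γ 2 * γ 3 * γ 6)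
    + (4 : ℤ) • (γ 4 * γ 5 * γ 6)

def S₁ : Matrix (Fin 8) (Fin 8) ℤ := γ 0 * γ 1 - γ 4 * γ 5
def S₂ : Matrix (Fin 8) (Fin 8) ℤ := γ 0 * γ 2 + γ 1 * γ 3 + γ 2 * γ 4 + γ 3 * γ 5
def S₃ : Matrix (Fin 8) (Fin 8) ℤ := γ 0 * γ 3 - γ 1 * γ 2 + γ 2 * γ 5 - γ 3 * γ 4

def P₀ : Matrix (Fin 8) (Fin 8) ℤ := diagonal ![1, 0, 0, 0, 0, 0, 0, 0]
def P₁ : Matrix (Fin 8) (Fin 8) ℤ := diagonal ![0, 1, 0, 0, 0, 0, 0, 0]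
def P₂ : Matrix (Fin 8) (Fin 8) ℤ := diagonal ![0, 0, 1, 1, 1, 1, 1, 1]

lemma A_mul_self : A * A = (16 : ℤ) • P₂ := by decide +kernel
lemma B_mul_self : B * B = (16 : ℤ) • P₂ := by decide +kernel
lemma C_mul_self : C * C = (576 : ℤ) • P₁ + (16 : ℤ) • P₂ := by decide +kernel
lemma φ_mul_self : φ * φ = (49 : ℤ) • P₀ + P₁ + P₂ := by decide +kernel
lemma B_mul_A : B * A = -(A * B) := by decide +kernel
lemma C_mul_A : C * A = (8 : ℤ) • A - A * C := by decide +kernel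
lemma φ_mul_A : φ * A = (2 : ℤ) • A - A * φ := by decide +kernel
lemma C_mul_B : C * B = (8 : ℤ) • B - B * C := by decide +kernel
lemma φ_mul_B : φ * B = (2 : ℤ) • B - B * φ := by decide +kernel
lemma φ_mul_C : φ * C = (-48 : ℤ) • P₁ + (8 : ℤ) • P₂ - C * φ := by decide +kernel
lemma curvature_eq : (2 : ℤ) • (S₁ * S₁) + S₂ * S₂ + S₃ * S₃ = (-16 : ℤ) • P₂ := by
  decide +kernel
lemma P₀_add_P₁_add_P₂ : P₀ + P₁ + P₂ = 1 := by decide +kernel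

end IntModel

open IntModel

abbrev castInt : Matrix (Fin 8) (Fin 8) ℤ →+* M8 := (Int.castRingHom ℝ).mapMatrix

lemma e_eq_castInt (i : Fin 7) : e i = castInt (cliffordGen ℤ i) :=
  (map_cliffordGen (Int.castRingHom ℝ) i).symm

lemma castInt_zsmul (n : ℤ) (X : Matrix (Fin 8) (Fin 8) ℤ) :
    castInt (n • X) = (n : ℝ) • castInt X := by
  rw [map_zsmul, Int.cast_smul_eq_zsmul]

lemma σ3_φf : σ3 φf = castInt IntModel.φ := by
  simp (disch := decide) only [φf, σ3_add, σ3_sub, σ3_w3, e_eq_castInt, IntModel.φ, map_add,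
    map_sub, map_mul]

lemma σ3_Af : σ3 Af = castInt A := by
  simp (disch := decide) only [Af, σ3_add, σ3_sub, σ3_smul, σ3_w3, e_eq_castInt, A, map_add,
    map_sub, map_mul, castInt_zsmul]
  norm_num

lemma σ3_Bf : σ3 Bf = castInt B := by
  simp (disch := decide) only [Bf, σ3_add, σ3_sub, σ3_smul, σ3_w3, e_eq_castInt, B, map_add,
    map_sub, map_mul, castInt_zsmul]
  norm_num

lemma σ3_Cf : σ3 Cf = castInt C := by
  simp (disch := decide) only [Cf, σ3_add, σ3_sub, σ3_smul, σ3_w3, e_eq_castInt, C, map_add,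
    map_sub, map_mul, castInt_zsmul]
  norm_num

lemma σ2_S1f : σ2 S1f = castInt S₁ := by
  simp (disch := decide) only [S1f, σ2_sub, σ2_w2, e_eq_castInt, S₁, map_sub, map_mul]

lemma σ2_S2f : σ2 S2f = castInt S₂ := by
  simp (disch := decide) only [S2f, σ2_add, σ2_w2, e_eq_castInt, S₂, map_add, map_mul]

lemma σ2_S3f : σ2 S3f = castInt S₃ := by
  simp (disch := decide) only [S3f, σ2_add, σ2_sub, σ2_w2, e_eq_castInt, S₃, map_add, map_sub,
    map_mul]

lemma σ2_curvature_eq :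
    (2 : ℝ) • σ2 S1f ^ 2 + σ2 S2f ^ 2 + σ2 S3f ^ 2 = (-16 : ℝ) • castInt P₂ := by
  have h := congrArg castInt curvature_eq
  simp only [map_add, map_mul, castInt_zsmul] at h
  rw [σ2_S1f, σ2_S2f, σ2_S3f, sq, sq, sq]
  exact_mod_cast h

theorem σ3_sq_add_smul_curvature (a b c d x : ℝ) :
    σ3 (d • φf + a • Af + b • Bf + c • Cf) ^ 2
        + x • ((2 : ℝ) • σ2 S1f ^ 2 + σ2 S2f ^ 2 + σ2 S3f ^ 2)
      = (49 * d ^ 2) • castInt P₀ + (d - 24 * c) ^ 2 • castInt P₁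
        + (16 * (a ^ 2 + b ^ 2) + (d + 4 * c) ^ 2 - 16 * x) • castInt P₂
        + (2 * (d + 4 * c) * a) • castInt A + (2 * (d + 4 * c) * b) • castInt B := by
  rw [σ2_curvature_eq, σ3_add, σ3_add, σ3_add, σ3_smul, σ3_smul, σ3_smul, σ3_smul, σ3_φf,
    σ3_Af, σ3_Bf, σ3_Cf, sq]
  simp only [add_mul, mul_add, smul_mul_smul_comm, ← map_mul]
  simp only [A_mul_self, B_mul_self, C_mul_self, φ_mul_self, B_mul_A, C_mul_A, φ_mul_A, C_mul_B,
    φ_mul_B, φ_mul_C]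
  simp only [map_add, map_sub, map_neg, castInt_zsmul]
  module

lemma exists_eq_smul_one_iff (α β δ p q : ℝ) :
    (∃ lam : ℝ, α • castInt P₀ + β • castInt P₁ + δ • castInt P₂ + p • castInt A + q • castInt B
        = lam • (1 : M8)) ↔ α = δ ∧ β = δ ∧ p = 0 ∧ q = 0 := by
  constructor
  · rintro ⟨lam, h⟩
    have hA : (A 0 0, A 1 1, A 2 2, A 2 6, A 2 7) = (0, 0, 0, -4, 0) := by decide +kernel
    have hB : (B 0 0, B 1 1, B 2 2, B 2 6, B 2 7) = (0, 0, 0, 0, 4) := by decide +kernel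
    simp only [Prod.mk.injEq] at hA hB
    have entry (i j : Fin 8) := congrFun (congrFun h i) j
    have h₀₀ := entry 0 0
    have h₁₁ := entry 1 1
    have h₂₂ := entry 2 2
    have h₂₆ := entry 2 6
    have h₂₇ := entry 2 7
    simp only [P₀, P₁, P₂, RingHom.mapMatrix_apply, Int.coe_castRingHom, Int.cast_zero,
      diagonal_map, Fin.isValue, Matrix.add_apply, Matrix.smul_apply, diagonal_apply_eq,
      cons_val_zero, Int.cast_one, smul_eq_mul, mul_one, mul_zero, add_zero, map_apply, hA, hB,
      one_apply_eq, cons_val_one, zero_add, cons_val, ne_eq, Fin.reduceEq, not_false_eq_true,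
      diagonal_apply_ne, Int.reduceNeg, Int.cast_neg, Int.cast_ofNat, mul_neg, one_apply_ne,
      neg_eq_zero, mul_eq_zero, OfNat.ofNat_ne_zero, or_false] at h₀₀ h₁₁ h₂₂ h₂₆ h₂₇
    exact ⟨by linarith, by linarith, by linarith, by linarith⟩
  · rintro ⟨hα, hβ, hp, hq⟩
    refine ⟨δ, ?_⟩
    rw [hα, hβ, hp, hq, ← map_one castInt, ← P₀_add_P₁_add_P₂]
    simp only [map_add, zero_smul, add_zero]
    module

lemma bianchi_coefficients_iff (a b c d x : ℝ) :
    (49 * d ^ 2 = 16 * (a ^ 2 + b ^ 2) + (d + 4 * c) ^ 2 - 16 * x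
      ∧ (d - 24 * c) ^ 2 = 16 * (a ^ 2 + b ^ 2) + (d + 4 * c) ^ 2 - 16 * x
      ∧ 2 * (d + 4 * c) * a = 0 ∧ 2 * (d + 4 * c) * b = 0)
    ↔ (d = -4 * c ∧ x = a ^ 2 + b ^ 2 - 49 * c ^ 2)
      ∨ (d = 3 * c ∧ a = 0 ∧ b = 0 ∧ 2 * x = -49 * c ^ 2) := by
  constructor
  · rintro ⟨h₀, h₁, hda, hdb⟩
    have hd : (d + 4 * c) * (d - 3 * c) = 0 := by linear_combination (h₀ - h₁) / 48
    rcases mul_eq_zero.1 hd with hd | hd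
    · obtain rfl : d = -4 * c := by linarith
      exact Or.inl ⟨rfl, by linear_combination h₀ / 16⟩
    obtain rfl : d = 3 * c := by linarith
    by_cases hc : c = 0
    · subst hc
      exact Or.inl ⟨by ring, by linear_combination h₀ / 16⟩
    have ha : a = 0 :=
      (mul_eq_zero.1 (by linear_combination hda / 14 : c * a = 0)).resolve_left hc
    have hb : b = 0 :=
      (mul_eq_zero.1 (by linear_combination hdb / 14 : c * b = 0)).resolve_left hc
    subst ha hb
    exact Or.inr ⟨rfl, rfl, rfl, by linear_combination h₀ / 8⟩
  · rintro (⟨rfl, rfl⟩ | ⟨rfl, rfl, rfl, hx⟩)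
    · exact ⟨by ring, by ring, by ring, by ring⟩
    · exact ⟨by linear_combination 8 * hx, by linear_combination 8 * hx, by ring, by ring⟩

theorem stmt_19_general (a b c d x : ℝ) :
    (∃ lam : ℝ,
        σ3 (d • φf + a • Af + b • Bf + c • Cf) ^ 2
          + x • ((2:ℝ) • σ2 S1f ^ 2 + σ2 S2f ^ 2 + σ2 S3f ^ 2)
          = lam • (1 : M8))
      ↔ ((d = -4 * c ∧ x = a ^ 2 + b ^ 2 - 49 * c ^ 2) ∨
         (d = 3 * c ∧ a = 0 ∧ b = 0 ∧ 2 * x = -49 * c ^ 2)) := by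
  rw [σ3_sq_add_smul_curvature, exists_eq_smul_one_iff]
  exact bianchi_coefficients_iff a b c d x

/-- Bianchi identity for holonomy so(3):
σ(T)² + x(2σ(S₁)² + σ(S₂)² + σ(S₃)²) is scalar iff
(d = −4c ∧ x = a² + b² − 49c²) or (d = 3c ∧ a = 0 ∧ b = 0 ∧ 2x = −49c²). -/
theorem stmt_19 (a b c d x : ℝ) (hd : d = 3 * c ∨ d = -4 * c) :
    (∃ lam : ℝ,
        σ3 (d • φf + a • Af + b • Bf + c • Cf) ^ 2
          + x • ((2:ℝ) • σ2 S1f ^ 2 + σ2 S2f ^ 2 + σ2 S3f ^ 2)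
          = lam • (1 : M8))
      ↔ ((d = -4 * c ∧ x = a ^ 2 + b ^ 2 - 49 * c ^ 2) ∨
         (d = 3 * c ∧ a = 0 ∧ b = 0 ∧ 2 * x = -49 * c ^ 2)) :=
  stmt_19_general a b c d x
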